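/- arXiv:1205.3913 — 3 statements merged into one kernel-verified Lean document; each statement's English description precedes it below -/
import Mathlib

section
/- The function G(t) = 8t/sinh(2t) + 2/cosh^2(t) - 4t^2 + 2 is non-increasing on (0,∞). -/
open Real Set

lemma sinh_lt_mul_cosh {x : ℝ} (hx : 0 < x) : Real.sinh x < x * Real.cosh x := by
  have h : StrictMonoOn (fun y : ℝ => y * Real.cosh y - Real.sinh y) (Set.Ici 0) := by
    apply strictMonoOn_of_deriv_pos (convex_Ici 0)
    · fun_prop
    · intro y hy
      rw [interior_Ici] at hy
      have : HasDerivAt (fun y : ℝ => y * Real.cosh y - Real.sinh y)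
          (1 * Real.cosh y + y * Real.sinh y - Real.cosh y) y := by
        exact (((hasDerivAt_id y).mul (Real.hasDerivAt_cosh y)).sub (Real.hasDerivAt_sinh y))
      rw [this.deriv]
      have := Real.sinh_pos_iff.mpr hy
      nlinarith [mul_pos (Set.mem_Ioi.mp hy) this]
  have := h (Set.self_mem_Ici) (Set.mem_Ici.mpr hx.le) hx
  simpa using this

lemma sinh_div_strictMono : StrictMonoOn (fun x : ℝ => Real.sinh x / x) (Set.Ioi 0) := by
  apply strictMonoOn_of_deriv_pos (convex_Ioi 0)
  · apply ContinuousOn.div Real.continuous_sinh.continuousOn continuousOn_id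
    intro x hx; exact ne_of_gt hx
  · intro x hx
    rw [interior_Ioi] at hx
    have hx0 : x ≠ 0 := ne_of_gt hx
    have : HasDerivAt (fun x : ℝ => Real.sinh x / x)
        ((Real.cosh x * x - Real.sinh x * 1) / x ^ 2) x :=
      (Real.hasDerivAt_sinh x).div (hasDerivAt_id x) hx0
    rw [this.deriv]
    have h1 := sinh_lt_mul_cosh hx
    have h2 : (0:ℝ) < x ^ 2 := by positivity
    apply div_pos _ h2
    nlinarith

/-- The function `G(t) = 8t/sinh(2t) + 2/cosh²t - 4t² + 2` is non-increasing on `(0,∞)`. -/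
theorem stmt3 :
    AntitoneOn
      (fun t : ℝ => 8 * t / Real.sinh (2 * t) + 2 / Real.cosh t ^ 2 - 4 * t ^ 2 + 2)
      (Set.Ioi 0) := by
  intro a ha b hb hab
  simp only [Set.mem_Ioi] at ha hb
  have hsa : 0 < Real.sinh (2 * a) := Real.sinh_pos_iff.mpr (by linarith)
  have hsb : 0 < Real.sinh (2 * b) := Real.sinh_pos_iff.mpr (by linarith)
  -- term 1
  have key : Real.sinh (2 * a) / a ≤ Real.sinh (2 * b) / b := by
    rcases eq_or_lt_of_le hab with h | h
    · rw [h]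
    · have := sinh_div_strictMono (Set.mem_Ioi.mpr (by linarith : (0:ℝ) < 2*a))
        (Set.mem_Ioi.mpr (by linarith : (0:ℝ) < 2*b)) (by linarith)
      simp only at this
      have h2 : Real.sinh (2*a) / (2*a) ≤ Real.sinh (2*b) / (2*b) := this.le
      rw [div_le_div_iff₀ (by linarith) (by linarith)] at h2
      rw [div_le_div_iff₀ ha hb]
      nlinarith
  have t1 : 8 * b / Real.sinh (2 * b) ≤ 8 * a / Real.sinh (2 * a) := by
    rw [div_le_div_iff₀ hsb hsa]
    rw [div_le_div_iff₀ ha hb] at key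
    nlinarith
  -- term 2
  have hcab : Real.cosh a ≤ Real.cosh b := by
    have : |a| ≤ |b| := by rw [abs_of_pos ha, abs_of_pos hb]; exact hab
    exact Real.cosh_le_cosh.mpr this
  have hca : 0 < Real.cosh a := Real.cosh_pos _
  have hcb : 0 < Real.cosh b := Real.cosh_pos _
  have t2 : 2 / Real.cosh b ^ 2 ≤ 2 / Real.cosh a ^ 2 := by
    apply div_le_div_of_nonneg_left (by norm_num) (by positivity)
    nlinarith
  -- term 3
  have t3 : -(4 * b ^ 2) ≤ -(4 * a ^ 2) := by nlinarith
  linarith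
end

section
/- Let f : (0,∞) → ℝ be positive and smooth with f(0)=0, f'(0)=1, satisfying f'' + G f = 0 for a non-increasing function G, and suppose f'(ρ) = 0 with G(ρ) ≠ 0 for a unique ρ ∈ (0,∞). Then f'(t) < 0 for all t > ρ. -/
/-!
The equation gives `f''(ρ) = -G(ρ) f(ρ) ≠ 0`, so `ρ` is a simple zero of `f'`. Since `f'(0) = 1`
and `ρ` is the only zero of `f'` on `(0, ∞)`, `f' > 0` on `[0, ρ)`; a simple zero approached
through positive values from the left must be a downward crossing, so `f' < 0` just after `ρ`,
and having no further zero, `f'` stays negative on `(ρ, ∞)`.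
-/

open Set Filter Topology SignType

section ConstantSign

variable {X α : Type*} [TopologicalSpace X] [LinearOrder α] [TopologicalSpace α]
  [OrderClosedTopology α] {s : Set X} {g : X → α} {c : α} {a b : X}

theorem IsPreconnected.lt_of_lt_of_forall_ne (hs : IsPreconnected s) (hg : ContinuousOn g s)
    (hne : ∀ x ∈ s, g x ≠ c) (ha : a ∈ s) (hb : b ∈ s) (hga : c < g a) : c < g b := by
  by_contra! hgb
  obtain ⟨x, hx, hgx⟩ := hs.intermediate_value hb ha hg ⟨hgb, hga.le⟩
  exact hne x hx hgx

theorem IsPreconnected.lt_of_lt_of_forall_ne' (hs : IsPreconnected s) (hg : ContinuousOn g s)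
    (hne : ∀ x ∈ s, g x ≠ c) (ha : a ∈ s) (hb : b ∈ s) (hga : g a < c) : g b < c :=
  IsPreconnected.lt_of_lt_of_forall_ne (α := αᵒᵈ) hs hg hne ha hb hga

end ConstantSign

theorem neg_of_gt_of_unique_zero {g : ℝ → ℝ} {a ρ d : ℝ} (hg : ContinuousOn g (Ici a))
    (haρ : a < ρ) (hga : 0 < g a) (hd : HasDerivAt g d ρ) (hd0 : d ≠ 0) (hgρ : g ρ = 0)
    (hzero : ∀ x > a, g x = 0 → x = ρ) : ∀ x > ρ, g x < 0 := by
  have hne : ∀ x ∈ Ico a ρ, g x ≠ 0 := by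
    rintro x ⟨hax, hxρ⟩ hx0
    rcases hax.eq_or_lt with rfl | hax
    · exact hga.ne' hx0
    · exact hxρ.ne (hzero x hax hx0)
  have hpos : ∀ x ∈ Ico a ρ, 0 < g x := fun x hx =>
    isPreconnected_Ico.lt_of_lt_of_forall_ne (hg.mono Ico_subset_Ici_self) hne
      (left_mem_Ico.2 haρ) hx hga
  have hdneg : d < 0 := by
    refine hd0.lt_or_gt.resolve_right fun hdpos => ?_
    have hsign := eventually_nhdsWithin_sign_eq_of_deriv_pos (hd.deriv ▸ hdpos) hgρ
    obtain ⟨x, hsx, hx⟩ :=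
      ((eventually_nhdsWithin_of_eventually_nhds hsign).and (Ioo_mem_nhdsLT haρ)).exists
    rw [sign_neg (sub_neg.2 hx.2), sign_eq_neg_one_iff] at hsx
    exact (hpos x (Ioo_subset_Ico_self hx)).not_gt hsx
  have hsign := eventually_nhdsWithin_sign_eq_of_deriv_neg (hd.deriv ▸ hdneg) hgρ
  obtain ⟨y, hsy, hy⟩ :=
    ((eventually_nhdsWithin_of_eventually_nhds (s := Ioi ρ) hsign).and self_mem_nhdsWithin).exists
  rw [sign_neg (sub_neg.2 hy), sign_eq_neg_one_iff] at hsy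
  intro x hx
  exact isPreconnected_Ioi.lt_of_lt_of_forall_ne' (hg.mono (Ioi_subset_Ici haρ.le))
    (fun z hz hz0 => hz.ne' (hzero z (haρ.trans hz) hz0)) hy hx hsy

theorem stmt8_general (G f f' : ℝ → ℝ)
    (hf2 : ∀ t, HasDerivAt f' (-(G t * f t)) t)
    (hfpos : ∀ t > (0 : ℝ), 0 < f t)
    (hf'0 : f' 0 = 1)
    (ρ : ℝ) (hρ : 0 < ρ) (hcrit : f' ρ = 0) (hGρ : G ρ ≠ 0)
    (huniq : ∀ t > (0 : ℝ), f' t = 0 → t = ρ) :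
    ∀ t > ρ, f' t < 0 := by
  have hcont : Continuous f' := continuous_iff_continuousAt.2 fun t => (hf2 t).continuousAt
  have hf''ρ : -(G ρ * f ρ) ≠ 0 := neg_ne_zero.2 (mul_ne_zero hGρ (hfpos ρ hρ).ne')
  exact neg_of_gt_of_unique_zero hcont.continuousOn hρ (hf'0 ▸ one_pos) (hf2 ρ) hf''ρ hcrit huniq

/-- If `f > 0` on `(0,∞)` solves `f'' + G f = 0` with `f(0) = 0`, `f'(0) = 1` for a
non-increasing curvature function `G`, and `ρ ∈ (0,∞)` is the unique critical point of
`f` with `f'(ρ) = 0` and `G(ρ) ≠ 0`, then `f'(t) < 0` for all `t > ρ`. -/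
theorem stmt8 (G f f' : ℝ → ℝ)
    (hG : AntitoneOn G (Set.Ici 0))
    (hf : ∀ t, HasDerivAt f (f' t) t)
    (hf2 : ∀ t, HasDerivAt f' (-(G t * f t)) t)
    (hfpos : ∀ t > (0 : ℝ), 0 < f t)
    (hf0 : f 0 = 0) (hf'0 : f' 0 = 1)
    (ρ : ℝ) (hρ : 0 < ρ) (hcrit : f' ρ = 0) (hGρ : G ρ ≠ 0)
    (huniq : ∀ t > (0 : ℝ), f' t = 0 → t = ρ) :
    ∀ t > ρ, f' t < 0 :=
  stmt8_general G f f' hf2 hfpos hf'0 ρ hρ hcrit hGρ huniq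
end

section
/- Let M̃ be a von Mangoldt surface of revolution with vertex p̃. Let x̃ ≠ p̃ with θ(x̃) = 0, t > 0, and ỹ, z̃ ∈ ∂B_t(p̃) with 0 < θ(ỹ) < θ(z̃) ≤ π. Then d̃(x̃, ỹ) < d̃(x̃, z̃). -/
open intervalIntegral Set


/- We model the surface of revolution `M̃` with metric `dt² + f(t)² dθ²` around the vertex
`p̃ = (0, _)` by the half-plane `{(t, θ) : t ≥ 0}`: the length of a path is
`∫ √(t'² + f(t)² θ'²)`, and the distance is the infimum of lengths of paths joining the two
points, allowing the angle coordinate of the endpoint to be shifted by any multiple of `2π`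
(this realizes the identifications `(t, θ) ~ (t, θ + 2π)`; since `f(0) = 0`, all points
`(0, θ)` are automatically at distance `0` from each other). -/

/-- The set of lengths of admissible paths from `x` to (a representative of) `y`. -/
noncomputable def pathLens (f : ℝ → ℝ) (x y : ℝ × ℝ) : Set ℝ :=
  { L | ∃ (γ γ' : ℝ → ℝ × ℝ) (k : ℤ),
      (∀ s, HasDerivAt γ (γ' s) s) ∧ Continuous γ' ∧
      (∀ s, 0 ≤ (γ s).1) ∧ γ 0 = x ∧ γ 1 = (y.1, y.2 + 2 * Real.pi * k) ∧
      L = ∫ s in (0:ℝ)..1,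
            Real.sqrt ((γ' s).1 ^ 2 + f ((γ s).1) ^ 2 * (γ' s).2 ^ 2) }

/-- The distance on the surface of revolution with profile `f`. -/
noncomputable def sDist (f : ℝ → ℝ) (x y : ℝ × ℝ) : ℝ :=
  sInf (pathLens f x y)

/-- `f` is the profile function of a smooth surface of revolution. -/
def IsProfile (f : ℝ → ℝ) : Prop :=
  ContDiff ℝ (⊤ : ℕ∞) f ∧ (∀ t, f (-t) = -f t) ∧ (∀ t > (0:ℝ), 0 < f t) ∧ deriv f 0 = 1

/-- The von Mangoldt condition: the radial curvature `G = -f''/f` is non-increasing. -/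
def IsVonMangoldt (f : ℝ → ℝ) : Prop :=
  IsProfile f ∧ AntitoneOn (fun t => -(deriv (deriv f) t) / f t) (Set.Ioi 0)


noncomputable def bmp (s : ℝ) : ℝ := expNegInvGlue s * expNegInvGlue (1 - s)
lemma bmp_nonneg (s : ℝ) : 0 ≤ bmp s :=
  mul_nonneg (expNegInvGlue.nonneg s) (expNegInvGlue.nonneg _)
lemma bmp_zero_left {s : ℝ} (h : s ≤ 0) : bmp s = 0 := by
  simp [bmp, expNegInvGlue.zero_of_nonpos h]
lemma bmp_zero_right {s : ℝ} (h : 1 ≤ s) : bmp s = 0 := by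
  simp [bmp, expNegInvGlue.zero_of_nonpos (by linarith : 1 - s ≤ 0)]
@[fun_prop] lemma bmp_cont : Continuous bmp :=
  (expNegInvGlue.contDiff (n := 1)).continuous.mul
    ((expNegInvGlue.contDiff (n := 1)).continuous.comp (by continuity))
lemma bmp_intble (a b : ℝ) : IntervalIntegrable bmp MeasureTheory.volume a b :=
  bmp_cont.intervalIntegrable a b
noncomputable def bc : ℝ := ∫ s in (0:ℝ)..1, bmp s
lemma bc_pos : 0 < bc := by
  refine intervalIntegral_pos_of_pos_on (bmp_intble 0 1) ?_ one_pos
  intro x hx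
  exact mul_pos (expNegInvGlue.pos_of_pos hx.1) (expNegInvGlue.pos_of_pos (by linarith [hx.2]))
noncomputable def sphi (s : ℝ) : ℝ := (∫ u in (0:ℝ)..s, bmp u) / bc
noncomputable def sphi' (s : ℝ) : ℝ := bmp s / bc
lemma sphi_hasDeriv (s : ℝ) : HasDerivAt sphi (sphi' s) s :=
  ((bmp_cont.integral_hasStrictDerivAt 0 s).hasDerivAt).div_const bc
@[fun_prop] lemma sphi_cont : Continuous sphi :=
  continuous_iff_continuousAt.2 fun s => (sphi_hasDeriv s).continuousAt
@[fun_prop] lemma sphi'_cont : Continuous sphi' := bmp_cont.div_const bc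
lemma sphi'_nonneg (s : ℝ) : 0 ≤ sphi' s := div_nonneg (bmp_nonneg s) bc_pos.le
lemma sphi'_zero_left {s : ℝ} (h : s ≤ 0) : sphi' s = 0 := by
  simp [sphi', bmp_zero_left h]
lemma sphi'_zero_right {s : ℝ} (h : 1 ≤ s) : sphi' s = 0 := by
  simp [sphi', bmp_zero_right h]
lemma sphi_zero : sphi 0 = 0 := by simp [sphi]
lemma sphi_one : sphi 1 = 1 := by
  rw [sphi, show (∫ u in (0:ℝ)..1, bmp u) = bc from rfl]
  exact div_self bc_pos.ne'
lemma sphi_mono : Monotone sphi := by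
  intro a b hab
  have h3 : (∫ u in (0:ℝ)..b, bmp u) - (∫ u in (0:ℝ)..a, bmp u) = ∫ u in a..b, bmp u := by
    rw [← integral_add_adjacent_intervals (bmp_intble 0 a) (bmp_intble a b)]; ring_nf
  have h4 : 0 ≤ ∫ u in a..b, bmp u :=
    integral_nonneg hab (fun u _ => bmp_nonneg u)
  have : (∫ u in (0:ℝ)..a, bmp u) ≤ ∫ u in (0:ℝ)..b, bmp u := by linarith
  exact div_le_div_of_nonneg_right this bc_pos.le |>.trans_eq rfl
lemma sphi_of_nonpos {s : ℝ} (h : s ≤ 0) : sphi s = 0 := by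
  have : (∫ u in (0:ℝ)..s, bmp u) = ∫ u in (0:ℝ)..s, (0:ℝ) :=
    integral_congr (fun u hu => by
      rw [uIcc_of_ge h] at hu
      exact bmp_zero_left hu.2)
  simp [sphi, this]
lemma sphi_of_ge_one {s : ℝ} (h : 1 ≤ s) : sphi s = 1 := by
  have h3 : (∫ u in (0:ℝ)..s, bmp u) = (∫ u in (0:ℝ)..1, bmp u) + ∫ u in (1:ℝ)..s, bmp u :=
    (integral_add_adjacent_intervals (bmp_intble 0 1) (bmp_intble 1 s)).symm
  have h4 : (∫ u in (1:ℝ)..s, bmp u) = 0 := by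
    have : (∫ u in (1:ℝ)..s, bmp u) = ∫ u in (1:ℝ)..s, (0:ℝ) :=
      integral_congr (fun u hu => by
        rw [uIcc_of_le h] at hu
        exact bmp_zero_right hu.1)
    simp [this]
  rw [sphi, h3, h4, add_zero, show (∫ u in (0:ℝ)..1, bmp u) = bc from rfl]
  exact div_self bc_pos.ne'
lemma sphi_mem (s : ℝ) : sphi s ∈ Icc (0:ℝ) 1 := by
  constructor
  · calc (0:ℝ) = sphi (min s 0) := (sphi_of_nonpos (min_le_right s 0)).symm
    _ ≤ sphi s := sphi_mono (min_le_left s 0)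
  · calc sphi s ≤ sphi (max s 1) := sphi_mono (le_max_left s 1)
    _ = 1 := sphi_of_ge_one (le_max_right s 1)

lemma sphi_affine_hasDeriv (m d s : ℝ) :
    HasDerivAt (fun s : ℝ => sphi (m*s+d)) (m * sphi' (m*s+d)) s := by
  have h1 : HasDerivAt (fun s : ℝ => m*s+d) m s := by
    simpa using ((hasDerivAt_id s).const_mul m).add_const d
  simpa [mul_comm, Function.comp_def] using (sphi_hasDeriv (m*s+d)).comp s h1

lemma subst_integral (w w' g : ℝ → ℝ) (a b : ℝ)
    (hw : ∀ s, HasDerivAt w (w' s) s) (hw' : Continuous w') (hg : Continuous g) :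
    ∫ s in a..b, w' s * g (w s) = ∫ u in w a..w b, g u := by
  simpa [Function.comp] using intervalIntegral.integral_comp_smul_deriv
    (fun x (_ : x ∈ uIcc a b) => hw x) hw'.continuousOn hg

lemma pathLens_nonneg {f : ℝ → ℝ} {x y : ℝ × ℝ} {L : ℝ} (h : L ∈ pathLens f x y) : 0 ≤ L := by
  obtain ⟨γ, γ', k, _, _, _, _, _, hL⟩ := h
  rw [hL]
  exact integral_nonneg zero_le_one (fun u _ => Real.sqrt_nonneg _)

set_option maxHeartbeats 1000000 in
lemma chord_path (f : ℝ → ℝ) (hfc : Continuous f) (hfpos : ∀ u > (0:ℝ), 0 < f u)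
    (tx t θy ρ K : ℝ) (htx : 0 < tx) (ht : 0 < t) (hθy : 0 < θy) (hθyπ : θy < Real.pi)
    (hρ : 0 < ρ) (hρtx : ρ ≤ tx) (hρt : ρ ≤ t) (hK : 1 ≤ K)
    (hfK : ∀ u, 0 < u → u ≤ ρ → f u ≤ K * u) :
    ∃ L ∈ pathLens f (tx, 0) (t, θy),
      L ≤ (tx - ρ) + K * (2 * ρ * Real.sin (θy/2)) + (t - ρ) := by
  have hπ := Real.pi_pos
  set cb := Real.cos (θy/2) with hcb_def
  have hcb : 0 < cb := Real.cos_pos_of_mem_Ioo ⟨by linarith, by linarith⟩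
  have hcos : ∀ v ∈ Icc (0:ℝ) θy, 0 < Real.cos (v - θy/2) := by
    intro v hv
    exact Real.cos_pos_of_mem_Ioo ⟨by simp at hv ⊢; linarith [hv.1, hv.2],
      by simp at hv ⊢; linarith [hv.1, hv.2]⟩
  set Rc : ℝ → ℝ := fun v => ρ * cb / Real.cos (v - θy/2) with hRc_def
  set Rc' : ℝ → ℝ := fun v => ρ * cb * Real.sin (v - θy/2) / Real.cos (v - θy/2)^2
    with hRc'_def
  have hRcd : ∀ v, Real.cos (v - θy/2) ≠ 0 → HasDerivAt Rc (Rc' v) v := by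
    intro v hv
    have h1 : HasDerivAt (fun v : ℝ => Real.cos (v - θy/2)) (-Real.sin (v - θy/2)) v := by
      simpa [Function.comp_def] using (Real.hasDerivAt_cos (v - θy/2)).comp v ((hasDerivAt_id v).sub_const (θy/2))
    have h2 : HasDerivAt (fun x => ρ * cb / Real.cos (x - θy/2)) _ v :=
      (hasDerivAt_const v (ρ * cb)).div h1 hv
    convert h2 using 1
    simp only [hRc'_def]; ring
  -- the angle function
  set w : ℝ → ℝ := fun s => θy * sphi (3*s + -1) with hw_def
  set w' : ℝ → ℝ := fun s => θy * (3 * sphi' (3*s + -1)) with hw'_def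
  have hwd : ∀ s, HasDerivAt w (w' s) s := fun s => (sphi_affine_hasDeriv 3 (-1) s).const_mul θy
  have hw'c : Continuous w' :=
    continuous_const.mul (continuous_const.mul (sphi'_cont.comp (by fun_prop)))
  have hw'nn : ∀ s, 0 ≤ w' s := fun s =>
    mul_nonneg hθy.le (mul_nonneg (by norm_num) (sphi'_nonneg _))
  have hwmem : ∀ s, w s ∈ Icc (0:ℝ) θy := by
    intro s
    have h := sphi_mem (3*s + -1)
    constructor
    · exact mul_nonneg hθy.le h.1
    · calc θy * sphi (3*s + -1) ≤ θy * 1 := by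
            exact mul_le_mul_of_nonneg_left h.2 hθy.le
        _ = θy := mul_one θy
  have hcosw : ∀ s, Real.cos (w s - θy/2) ≠ 0 := fun s => (hcos _ (hwmem s)).ne'
  -- radius function and its derivative
  set C1 : ℝ → ℝ := fun s =>
    tx + (ρ - tx) * sphi (3*s + 0) + (Rc (w s) - ρ) + (t - ρ) * sphi (3*s + -2) with hC1_def
  set C1' : ℝ → ℝ := fun s =>
    (ρ - tx) * (3 * sphi' (3*s + 0)) + Rc' (w s) * w' s + (t - ρ) * (3 * sphi' (3*s + -2))
    with hC1'_def
  have hC1d : ∀ s, HasDerivAt C1 (C1' s) s := by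
    intro s
    have h1 : HasDerivAt (fun s : ℝ => tx + (ρ - tx) * sphi (3*s + 0))
        ((ρ - tx) * (3 * sphi' (3*s + 0))) s :=
      ((sphi_affine_hasDeriv 3 0 s).const_mul (ρ - tx)).const_add tx
    have h2 : HasDerivAt (fun s : ℝ => Rc (w s) - ρ) (Rc' (w s) * w' s) s :=
      (((hRcd (w s) (hcosw s)).comp s (hwd s))).sub_const ρ
    have h3 : HasDerivAt (fun s : ℝ => (t - ρ) * sphi (3*s + -2))
        ((t - ρ) * (3 * sphi' (3*s + -2))) s :=
      (sphi_affine_hasDeriv 3 (-2) s).const_mul (t - ρ)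
    exact (h1.add h2).add h3
  have hC1'c : Continuous C1' := by
    have hwc : Continuous w := continuous_const.mul (sphi_cont.comp (by fun_prop))
    have hcw : Continuous fun s => Real.cos (w s - θy/2) :=
      Real.continuous_cos.comp (hwc.sub continuous_const)
    have h2 : Continuous fun s => Rc' (w s) := by
      apply Continuous.div
      · exact (continuous_const.mul (Real.continuous_sin.comp (hwc.sub continuous_const)))
      · exact hcw.pow 2
      · intro s; exact pow_ne_zero 2 (hcosw s)
    exact ((continuous_const.mul (continuous_const.mul (sphi'_cont.comp (by fun_prop)))).add
        (h2.mul hw'c)).add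
      (continuous_const.mul (continuous_const.mul (sphi'_cont.comp (by fun_prop))))
  have hC1c : Continuous C1 :=
    continuous_iff_continuousAt.2 fun s => (hC1d s).continuousAt
  -- bounds on Rc
  have hRc_le : ∀ v ∈ Icc (0:ℝ) θy, Rc v ≤ ρ := by
    intro v hv
    have h1 : cb ≤ Real.cos (v - θy/2) := by
      have habs : |v - θy/2| ≤ θy/2 := by
        rw [abs_le]; constructor <;> [linarith [hv.1]; linarith [hv.2]]
      calc cb = Real.cos (θy/2) := rfl
        _ ≤ Real.cos |v - θy/2| :=
            Real.cos_le_cos_of_nonneg_of_le_pi (abs_nonneg _) (by linarith) habs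
        _ = Real.cos (v - θy/2) := Real.cos_abs _
    rw [hRc_def]
    rw [div_le_iff₀ (hcos v hv)]
    nlinarith
  have hRc_pos : ∀ v ∈ Icc (0:ℝ) θy, 0 < Rc v := by
    intro v hv
    exact div_pos (mul_pos hρ hcb) (hcos v hv)
  have hRc_zero : Rc 0 = ρ := by
    rw [hRc_def]
    simp only [zero_sub, Real.cos_neg]
    rw [← hcb_def, mul_div_assoc, div_self hcb.ne', mul_one]
  have hRc_θy : Rc θy = ρ := by
    have hhalf : θy - θy/2 = θy/2 := by ring
    simp only [hRc_def, hhalf, ← hcb_def]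
    rw [mul_div_assoc, div_self hcb.ne', mul_one]
  -- the path
  set I : ℝ → ℝ := fun s => Real.sqrt (C1' s ^ 2 + f (C1 s) ^ 2 * (w' s) ^ 2) with hI_def
  have hIc : Continuous I := by
    apply Continuous.sqrt
    exact ((hC1'c.pow 2).add (((hfc.comp hC1c).pow 2).mul (hw'c.pow 2)))
  refine ⟨∫ s in (0:ℝ)..1, I s, ⟨fun s => (C1 s, w s), fun s => (C1' s, w' s), 0,
    fun s => (hC1d s).prodMk (hwd s), by fun_prop, ?_, ?_, ?_, rfl⟩, ?_⟩
  · -- positivity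
    intro s
    simp only
    rcases le_or_gt s (1/3 : ℝ) with h13 | h13
    · have e1 : sphi (3*s + -1) = 0 := sphi_of_nonpos (by linarith)
      have e2 : sphi (3*s + -2) = 0 := sphi_of_nonpos (by linarith)
      have e3 : w s = 0 := by rw [hw_def]; simp [e1]
      have h := sphi_mem (3*s + 0)
      rw [hC1_def]
      simp only [e2, e3, hRc_zero]
      nlinarith [h.1, h.2]
    · rcases le_or_gt s (2/3 : ℝ) with h23 | h23
      · have e1 : sphi (3*s + 0) = 1 := sphi_of_ge_one (by linarith)
        have e2 : sphi (3*s + -2) = 0 := sphi_of_nonpos (by linarith)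
        have h := hRc_pos (w s) (hwmem s)
        rw [hC1_def]
        simp only [e1, e2]
        nlinarith
      · have e1 : sphi (3*s + 0) = 1 := sphi_of_ge_one (by linarith)
        have e2 : sphi (3*s + -1) = 1 := sphi_of_ge_one (by linarith)
        have e3 : w s = θy := by rw [hw_def]; simp [e2]
        have h := sphi_mem (3*s + -2)
        rw [hC1_def]
        simp only [e3, hRc_θy, e1]
        nlinarith [h.1, h.2]
  · -- start point
    have e0 : sphi (0:ℝ) = 0 := sphi_zero
    have e1 : sphi (-1:ℝ) = 0 := sphi_of_nonpos (by norm_num)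
    have e2 : sphi (-2:ℝ) = 0 := sphi_of_nonpos (by norm_num)
    have ew : w 0 = 0 := by rw [hw_def]; norm_num [e1]
    have : C1 0 = tx := by
      rw [hC1_def]; norm_num [e0, e2, ew, hRc_zero]
    rw [Prod.ext_iff]
    exact ⟨this, ew⟩
  · -- end point
    have e0 : sphi (3:ℝ) = 1 := sphi_of_ge_one (by norm_num)
    have e1 : sphi (2:ℝ) = 1 := sphi_of_ge_one (by norm_num)
    have e2 : sphi (1:ℝ) = 1 := sphi_one
    have ew : w 1 = θy := by rw [hw_def]; norm_num [e1]
    have : C1 1 = t := by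
      rw [hC1_def]; norm_num [e0, e2, ew, hRc_θy]
    rw [Prod.ext_iff]
    constructor
    · exact this
    · push_cast; simpa using ew
  · -- length bound
    have hsplit1 : (∫ s in (0:ℝ)..(1/3), I s) + (∫ s in (1/3:ℝ)..1, I s)
        = ∫ s in (0:ℝ)..1, I s :=
      integral_add_adjacent_intervals (hIc.intervalIntegrable _ _) (hIc.intervalIntegrable _ _)
    have hsplit2 : (∫ s in (1/3:ℝ)..(2/3), I s) + (∫ s in (2/3:ℝ)..1, I s)
        = ∫ s in (1/3:ℝ)..1, I s :=
      integral_add_adjacent_intervals (hIc.intervalIntegrable _ _) (hIc.intervalIntegrable _ _)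
    -- piece 1
    have hp1 : (∫ s in (0:ℝ)..(1/3), I s) = tx - ρ := by
      have heq : EqOn I (fun s => (tx - ρ) * (3 * sphi' (3*s + 0))) (uIcc 0 (1/3)) := by
        intro s hs
        rw [uIcc_of_le (by norm_num : (0:ℝ) ≤ 1/3)] at hs
        have e1 : sphi' (3*s + -1) = 0 := sphi'_zero_left (by linarith [hs.2])
        have e2 : sphi' (3*s + -2) = 0 := sphi'_zero_left (by linarith [hs.2])
        have ew' : w' s = 0 := by rw [hw'_def]; simp [e1]
        rw [hI_def, hC1'_def]
        simp only [ew', e2]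
        rw [show ((ρ - tx) * (3 * sphi' (3*s + 0)) + Rc' (w s) * 0 + (t - ρ) * (3 * 0)) ^ 2
              + f (C1 s) ^ 2 * 0 ^ 2 = ((tx - ρ) * (3 * sphi' (3*s + 0))) ^ 2 by ring]
        exact Real.sqrt_sq (mul_nonneg (by linarith)
          (mul_nonneg (by norm_num) (sphi'_nonneg _)))
      rw [integral_congr heq]
      have hd : ∀ s ∈ uIcc (0:ℝ) (1/3), HasDerivAt (fun s => (tx - ρ) * sphi (3*s + 0))
          ((tx - ρ) * (3 * sphi' (3*s + 0))) s :=
        fun s _ => (sphi_affine_hasDeriv 3 0 s).const_mul (tx - ρ)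
      rw [integral_eq_sub_of_hasDerivAt hd (Continuous.intervalIntegrable (by fun_prop) _ _)]
      norm_num [sphi_one, sphi_zero]
    -- piece 3
    have hp3 : (∫ s in (2/3:ℝ)..1, I s) = t - ρ := by
      have heq : EqOn I (fun s => (t - ρ) * (3 * sphi' (3*s + -2))) (uIcc (2/3) 1) := by
        intro s hs
        rw [uIcc_of_le (by norm_num : (2/3:ℝ) ≤ 1)] at hs
        have e0 : sphi' (3*s + 0) = 0 := sphi'_zero_right (by linarith [hs.1])
        have e1 : sphi' (3*s + -1) = 0 := sphi'_zero_right (by linarith [hs.1])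
        have ew' : w' s = 0 := by rw [hw'_def]; simp [e1]
        rw [hI_def, hC1'_def]
        simp only [ew', e0]
        rw [show ((ρ - tx) * (3 * 0) + Rc' (w s) * 0 + (t - ρ) * (3 * sphi' (3*s + -2))) ^ 2
              + f (C1 s) ^ 2 * 0 ^ 2 = ((t - ρ) * (3 * sphi' (3*s + -2))) ^ 2 by ring]
        exact Real.sqrt_sq (mul_nonneg (by linarith)
          (mul_nonneg (by norm_num) (sphi'_nonneg _)))
      rw [integral_congr heq]
      have hd : ∀ s ∈ uIcc (2/3:ℝ) 1, HasDerivAt (fun s => (t - ρ) * sphi (3*s + -2))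
          ((t - ρ) * (3 * sphi' (3*s + -2))) s :=
        fun s _ => (sphi_affine_hasDeriv 3 (-2) s).const_mul (t - ρ)
      rw [integral_eq_sub_of_hasDerivAt hd (Continuous.intervalIntegrable (by fun_prop) _ _)]
      norm_num [sphi_one, sphi_zero]
    -- piece 2
    have hp2 : (∫ s in (1/3:ℝ)..(2/3), I s) ≤ K * (2 * ρ * Real.sin (θy/2)) := by
      set pj : ℝ → ℝ := fun v => max 0 (min v θy) with hpj_def
      have hpjc : Continuous pj := continuous_const.max (continuous_id.min continuous_const)
      have hpjmem : ∀ v, pj v ∈ Icc (0:ℝ) θy := fun v =>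
        ⟨le_max_left _ _, max_le hθy.le (min_le_right _ _)⟩
      have hpj_eq : ∀ v ∈ Icc (0:ℝ) θy, pj v = v := by
        intro v hv
        rw [hpj_def]
        simp only [min_eq_left hv.2, max_eq_right hv.1]
      set Hg : ℝ → ℝ := fun v => Real.sqrt (Rc' (pj v)^2 + f (Rc (pj v))^2) with hHg_def
      have hcpj : Continuous fun v => Real.cos (pj v - θy/2) :=
        Real.continuous_cos.comp (hpjc.sub continuous_const)
      have hcpj0 : ∀ v, Real.cos (pj v - θy/2) ≠ 0 := fun v => (hcos _ (hpjmem v)).ne'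
      have hHgc : Continuous Hg := by
        have h1 : Continuous fun v => Rc' (pj v) :=
          Continuous.div (continuous_const.mul
            (Real.continuous_sin.comp (hpjc.sub continuous_const)))
            (hcpj.pow 2) (fun v => pow_ne_zero 2 (hcpj0 v))
        have h2 : Continuous fun v => Rc (pj v) :=
          Continuous.div continuous_const hcpj hcpj0
        exact ((h1.pow 2).add ((hfc.comp h2).pow 2)).sqrt
      have heq : EqOn I (fun s => w' s * Hg (w s)) (uIcc (1/3) (2/3)) := by
        intro s hs
        rw [uIcc_of_le (by norm_num : (1/3:ℝ) ≤ 2/3)] at hs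
        have e0 : sphi' (3*s + 0) = 0 := sphi'_zero_right (by linarith [hs.1])
        have e2 : sphi' (3*s + -2) = 0 := sphi'_zero_left (by linarith [hs.2])
        have e0' : sphi (3*s + 0) = 1 := sphi_of_ge_one (by linarith [hs.1])
        have e2' : sphi (3*s + -2) = 0 := sphi_of_nonpos (by linarith [hs.2])
        have eC1 : C1 s = Rc (w s) := by
          rw [hC1_def]; simp only [e0', e2']; ring
        have epj : pj (w s) = w s := hpj_eq _ (hwmem s)
        rw [hI_def, hC1'_def, hHg_def]
        simp only [e0, e2, epj, eC1]
        rw [show ((ρ - tx) * (3 * 0) + Rc' (w s) * w' s + (t - ρ) * (3 * 0)) ^ 2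
              + f (Rc (w s)) ^ 2 * w' s ^ 2
            = (w' s)^2 * (Rc' (w s) ^ 2 + f (Rc (w s)) ^ 2) by ring]
        rw [Real.sqrt_mul (sq_nonneg _), Real.sqrt_sq (hw'nn s)]
      rw [integral_congr heq]
      have hsub : (∫ s in (1/3:ℝ)..(2/3), w' s * Hg (w s)) = ∫ v in w (1/3)..w (2/3), Hg v :=
        subst_integral w w' Hg _ _ hwd hw'c hHgc
      have hw13 : w (1/3) = 0 := by rw [hw_def]; norm_num [sphi_zero]
      have hw23 : w (2/3) = θy := by rw [hw_def]; norm_num [sphi_one]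
      rw [hsub, hw13, hw23]
      have hRHSintble : IntervalIntegrable
          (fun v => K * ρ * cb * (1 / Real.cos (v - θy/2)^2)) MeasureTheory.volume 0 θy := by
        apply ContinuousOn.intervalIntegrable
        rw [uIcc_of_le hθy.le]
        apply ContinuousOn.mul continuousOn_const
        apply ContinuousOn.div continuousOn_const
        · exact ((Real.continuous_cos.comp (continuous_id.sub continuous_const)).continuousOn.pow 2)
        · intro v hv; exact pow_ne_zero 2 (hcos v hv).ne'
      have hmono : (∫ v in (0:ℝ)..θy, Hg v)
          ≤ ∫ v in (0:ℝ)..θy, K * ρ * cb * (1 / Real.cos (v - θy/2)^2) := by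
        apply integral_mono_on hθy.le (hHgc.intervalIntegrable _ _) hRHSintble
        intro v hv
        have epj : pj v = v := hpj_eq v hv
        have hcv := hcos v hv
        have hRv_pos := hRc_pos v hv
        have hRv_le := hRc_le v hv
        have hfRv : f (Rc v) ≤ K * Rc v := hfK _ hRv_pos hRv_le
        have hfRv_pos : 0 < f (Rc v) := hfpos _ hRv_pos
        rw [hHg_def]
        simp only [epj]
        have eR : Rc v = ρ * cb / Real.cos (v - θy/2) := by rw [hRc_def]
        have eR' : Rc' v = ρ * cb * Real.sin (v - θy/2) / Real.cos (v - θy/2)^2 := by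
          rw [hRc'_def]
        set cs := Real.cos (v - θy/2) with hcs_def
        set ss := Real.sin (v - θy/2) with hss_def
        have hsc : ss^2 + cs^2 = 1 := Real.sin_sq_add_cos_sq (v - θy/2)
        have hcs1 : cs ≤ 1 := Real.cos_le_one _
        have key : Rc' v ^ 2 + f (Rc v) ^ 2 ≤ (K * ρ * cb * (1 / cs^2))^2 := by
          have h1 : f (Rc v) ^ 2 ≤ K^2 * Rc v ^ 2 := by
            have := pow_le_pow_left₀ hfRv_pos.le hfRv 2
            calc f (Rc v) ^ 2 ≤ (K * Rc v)^2 := this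
              _ = K^2 * Rc v ^2 := by ring
          have h1' : K^2 * Rc v ^2 = K^2 * (ρ*cb)^2 * cs^2 / cs^4 := by
            rw [eR]; field_simp
          have h2 : Rc' v ^ 2 = (ρ*cb)^2 * ss^2 / cs^4 := by
            rw [eR']; field_simp
          have h3 : (K * ρ * cb * (1 / cs^2))^2 = (K * (ρ*cb))^2 / cs^4 := by
            field_simp
          have hnum : (ρ*cb)^2 * ss^2 + K^2 * (ρ*cb)^2 * cs^2 ≤ (K * (ρ*cb))^2 := by
            have hK2 : (0:ℝ) ≤ K^2 - 1 := by nlinarith [hK]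
            have e : (K * (ρ*cb))^2 - ((ρ*cb)^2*ss^2 + K^2*(ρ*cb)^2*cs^2)
                = (K^2-1)*((ρ*cb)^2*ss^2) := by
              have ecs : cs^2 = 1 - ss^2 := by linarith
              rw [ecs]; ring
            have hpos : 0 ≤ (K^2-1)*((ρ*cb)^2*ss^2) :=
              mul_nonneg hK2 (mul_nonneg (sq_nonneg _) (sq_nonneg _))
            linarith
          rw [h3]
          calc Rc' v ^ 2 + f (Rc v) ^ 2 ≤ (ρ*cb)^2 * ss^2 / cs^4 + K^2 * (ρ*cb)^2 * cs^2 / cs^4 := by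
                rw [h2, ← h1']; linarith
            _ = ((ρ*cb)^2 * ss^2 + K^2 * (ρ*cb)^2 * cs^2) / cs^4 := by ring
            _ ≤ (K * (ρ*cb))^2 / cs^4 := by gcongr
        calc Real.sqrt (Rc' v^2 + f (Rc v)^2)
            ≤ Real.sqrt ((K * ρ * cb * (1/cs^2))^2) := Real.sqrt_le_sqrt key
          _ = K * ρ * cb * (1/cs^2) := Real.sqrt_sq (by positivity)
      have hint : (∫ v in (0:ℝ)..θy, K * ρ * cb * (1 / Real.cos (v - θy/2)^2))
          = K * (2 * ρ * Real.sin (θy/2)) := by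
        have hd : ∀ v ∈ uIcc (0:ℝ) θy,
            HasDerivAt (fun v => K * ρ * cb * Real.tan (v - θy/2))
              (K * ρ * cb * (1/Real.cos (v-θy/2)^2)) v := by
          intro v hv
          rw [uIcc_of_le hθy.le] at hv
          have h1 : HasDerivAt (fun v : ℝ => v - θy/2) 1 v := (hasDerivAt_id v).sub_const _
          have h2 := (Real.hasDerivAt_tan (hcos v hv).ne').comp v h1
          simpa [mul_comm] using h2.const_mul (K * ρ * cb)
        rw [integral_eq_sub_of_hasDerivAt hd hRHSintble]
        rw [show θy - θy/2 = θy/2 by ring, show (0:ℝ) - θy/2 = -(θy/2) by ring, Real.tan_neg]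
        rw [Real.tan_eq_sin_div_cos, ← hcb_def]
        field_simp
        ring
      linarith
    linarith

lemma cs_ineq (A B N a b : ℝ) (hN : 0 < N) (hsq : A^2 + B^2 = N^2) :
    A/N * a + B/N * b ≤ Real.sqrt (a^2 + b^2) := by
  have hs := Real.sq_sqrt (by positivity : (0:ℝ) ≤ a^2+b^2)
  have hnn := Real.sqrt_nonneg (a^2+b^2)
  rw [div_mul_eq_mul_div, div_mul_eq_mul_div, ← add_div, div_le_iff₀ hN]
  nlinarith [sq_nonneg (A*b - B*a), mul_nonneg hnn hN.le]

lemma sqrt_gap (q a Λ : ℝ) (hq : 0 < q) (ha : |a| ≤ Λ) :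
    Real.sqrt (Λ^2 + q^2) - Λ ≤ Real.sqrt (a^2 + q^2) - |a| := by
  have h0 : 0 ≤ |a| := abs_nonneg a
  have e : a^2 = |a|^2 := (sq_abs a).symm
  rw [e]
  set u := |a| with hu
  have hsa := Real.sq_sqrt (by positivity : (0:ℝ) ≤ u^2+q^2)
  have hsΛ := Real.sq_sqrt (by positivity : (0:ℝ) ≤ Λ^2+q^2)
  have h1 : Real.sqrt (u^2+q^2) ≤ Real.sqrt (Λ^2+q^2) := Real.sqrt_le_sqrt (by nlinarith)
  have hnn1 := Real.sqrt_nonneg (u^2+q^2)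
  have hnn2 := Real.sqrt_nonneg (Λ^2+q^2)
  have h3 : u < Real.sqrt (u^2+q^2) := by nlinarith
  have h4 : 0 ≤ (Real.sqrt (u^2+q^2) - u) * ((Real.sqrt (Λ^2+q^2) + Λ) - (Real.sqrt (u^2+q^2) + u)) :=
    mul_nonneg (by linarith) (by linarith)
  nlinarith [h4]

lemma angle_gap (θy θz e : ℝ) (k : ℤ) (hθy : 0 < θy) (hyz : θy < θz) (hz : θz ≤ Real.pi)
    (he : e = θy ∨ e = -θy) : θz - θy ≤ |θz + 2*Real.pi*k - e| := by
  have hπ := Real.pi_pos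
  have he1 : e ≤ θy := by rcases he with h|h <;> rw [h] <;> linarith
  have he2 : -θy ≤ e := by rcases he with h|h <;> rw [h] <;> linarith
  rcases lt_trichotomy k 0 with hk | hk | hk
  · have hk1 : (k:ℝ) ≤ -1 := by exact_mod_cast Int.le_sub_one_of_lt hk
    rw [le_abs]; right
    nlinarith [hk1, hπ]
  · rw [hk]
    rw [le_abs]; left
    push_cast
    linarith
  · have hk1 : (1:ℝ) ≤ (k:ℝ) := by exact_mod_cast hk
    rw [le_abs]; left
    nlinarith [hk1, hπ]

set_option maxHeartbeats 1600000 in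
lemma surgery (f : ℝ → ℝ) (hfc : Continuous f)
    (tx t θy θz : ℝ) (htx : 0 < tx) (ht : 0 < t)
    (hθy : 0 < θy) (hθyz : θy < θz) (hθz : θz ≤ Real.pi)
    (δ δ' Lz : ℝ) (hδ : 0 < δ) (hδ' : 0 < δ')
    (hfδ : ∀ u, δ ≤ u → u ≤ 2*tx + t + 1 → δ' ≤ f u)
    (hLz : Lz ∈ pathLens f (tx, 0) (t, θz)) :
    tx + t - 2*δ ≤ Lz ∨
    ∃ Ly ∈ pathLens f (tx, 0) (t, θy),
      Ly + (Real.sqrt ((2*tx+2*t+1)^2 + (δ'*(θz-θy))^2) - (2*tx+2*t+1)) ≤ Lz := by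
  have hπ := Real.pi_pos
  obtain ⟨γ, γ', k, hder, hctsd, hposr, h0, h1, hLdef⟩ := hLz
  set r : ℝ → ℝ := fun s => (γ s).1 with hr_def
  set θf : ℝ → ℝ := fun s => (γ s).2 with hθf_def
  set r' : ℝ → ℝ := fun s => (γ' s).1 with hr'_def
  set θf' : ℝ → ℝ := fun s => (γ' s).2 with hθf'_def
  have hrd : ∀ s, HasDerivAt r (r' s) s := fun s =>
    (ContinuousLinearMap.fst ℝ ℝ ℝ).hasFDerivAt.comp_hasDerivAt s (hder s)
  have hθd : ∀ s, HasDerivAt θf (θf' s) s := fun s =>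
    (ContinuousLinearMap.snd ℝ ℝ ℝ).hasFDerivAt.comp_hasDerivAt s (hder s)
  have hrc : Continuous r := continuous_iff_continuousAt.2 fun s => (hrd s).continuousAt
  have hθc : Continuous θf := continuous_iff_continuousAt.2 fun s => (hθd s).continuousAt
  have hr'c : Continuous r' := continuous_fst.comp hctsd
  have hθ'c : Continuous θf' := continuous_snd.comp hctsd
  set g : ℝ → ℝ := fun s => Real.sqrt (r' s ^ 2 + f (r s) ^ 2 * θf' s ^ 2) with hg_def
  have hgc : Continuous g := (((hr'c.pow 2).add (((hfc.comp hrc).pow 2).mul (hθ'c.pow 2)))).sqrt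
  have hr0 : r 0 = tx := by rw [hr_def]; simp [h0]
  have hθ0 : θf 0 = 0 := by rw [hθf_def]; simp [h0]
  have hr1 : r 1 = t := by rw [hr_def]; simp [h1]
  have hθ1 : θf 1 = θz + 2*Real.pi*k := by rw [hθf_def]; simp [h1]
  have habsr' : ∀ s, |r' s| ≤ g s := by
    intro s
    rw [hg_def, ← Real.sqrt_sq_eq_abs]
    exact Real.sqrt_le_sqrt (le_add_of_nonneg_right (by positivity))
  have hLint : Lz = ∫ s in (0:ℝ)..1, g s := hLdef
  -- FTC for r and θf
  have hftc_r : ∀ a b : ℝ, (∫ s in a..b, r' s) = r b - r a := by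
    intro a b
    exact intervalIntegral.integral_eq_sub_of_hasDerivAt (fun s _ => hrd s)
      (hr'c.intervalIntegrable _ _)
  have hftc_θ : ∀ a b : ℝ, (∫ s in a..b, θf' s) = θf b - θf a := by
    intro a b
    exact intervalIntegral.integral_eq_sub_of_hasDerivAt (fun s _ => hθd s)
      (hθ'c.intervalIntegrable _ _)
  have habs_int : ∀ a b : ℝ, a ≤ b → |r b - r a| ≤ ∫ s in a..b, |r' s| := by
    intro a b hab
    rw [← hftc_r a b]
    exact intervalIntegral.abs_integral_le_integral_abs hab
  by_cases hdip : ∃ s ∈ Icc (0:ℝ) 1, r s ≤ δ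
  · left
    obtain ⟨u, hu, hru⟩ := hdip
    have h5 : (∫ s in (0:ℝ)..u, |r' s|) + (∫ s in u..(1:ℝ), |r' s|) = ∫ s in (0:ℝ)..1, |r' s| :=
      integral_add_adjacent_intervals ((hr'c.abs).intervalIntegrable _ _)
        ((hr'c.abs).intervalIntegrable _ _)
    have h6 : (∫ s in (0:ℝ)..1, |r' s|) ≤ ∫ s in (0:ℝ)..1, g s :=
      integral_mono_on zero_le_one ((hr'c.abs).intervalIntegrable _ _)
        (hgc.intervalIntegrable _ _) (fun s _ => habsr' s)
    have h7 := habs_int 0 u hu.1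
    have h8 := habs_int u 1 hu.2
    rw [hr0] at h7; rw [hr1] at h8
    have h9 : tx - δ ≤ |r u - tx| := by
      rw [abs_sub_comm]
      calc tx - δ ≤ tx - r u := by linarith
        _ ≤ |tx - r u| := le_abs_self _
    have h10 : t - δ ≤ |t - r u| := by
      calc t - δ ≤ t - r u := by linarith
        _ ≤ |t - r u| := le_abs_self _
    rw [hLint]
    linarith
  · rcases le_or_gt (tx + t + 1) Lz with hbig | hsmall
    · left; linarith
    right
    push_neg at hdip
    have hnd : ∀ s ∈ Icc (0:ℝ) 1, δ < r s := hdip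
    -- upper bound on r
    have hint_abs_le : (∫ s in (0:ℝ)..1, |r' s|) ≤ Lz := by
      rw [hLint]
      exact integral_mono_on zero_le_one ((hr'c.abs).intervalIntegrable _ _)
        (hgc.intervalIntegrable _ _) (fun s _ => habsr' s)
    have hr_ub : ∀ s ∈ Icc (0:ℝ) 1, r s ≤ 2*tx + t + 1 := by
      intro s hs
      have h7 := habs_int 0 s hs.1
      rw [hr0] at h7
      have hsplit : (∫ v in (0:ℝ)..s, |r' v|) + (∫ v in s..(1:ℝ), |r' v|)
          = ∫ v in (0:ℝ)..1, |r' v| :=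
        integral_add_adjacent_intervals ((hr'c.abs).intervalIntegrable _ _)
          ((hr'c.abs).intervalIntegrable _ _)
      have hnn : 0 ≤ ∫ v in s..(1:ℝ), |r' v| :=
        integral_nonneg hs.2 (fun v _ => abs_nonneg _)
      have : r s - tx ≤ |r s - tx| := le_abs_self _
      linarith
    -- find the crossing point
    have hEgt : θy < |θf 1| := by
      rw [hθ1]
      rcases lt_trichotomy k 0 with hk | hk | hk
      · have hk1 : (k:ℝ) ≤ -1 := by exact_mod_cast Int.le_sub_one_of_lt hk
        rw [lt_abs]; right
        nlinarith [hk1, hπ]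
      · rw [hk]; push_cast; rw [lt_abs]; left; linarith
      · have hk1 : (1:ℝ) ≤ (k:ℝ) := by exact_mod_cast hk
        rw [lt_abs]; left
        nlinarith [hk1, hπ]
    have hIVT : ∃ s₀ ∈ Icc (0:ℝ) 1, |θf s₀| = θy := by
      have hc : ContinuousOn (fun s => |θf s|) (Icc 0 1) := (hθc.abs).continuousOn
      have hmem : θy ∈ Icc (|θf 0|) (|θf 1|) := by
        rw [hθ0]; simp only [abs_zero]
        exact ⟨hθy.le, hEgt.le⟩
      obtain ⟨s₀, hs₀, hval⟩ := intermediate_value_Icc zero_le_one hc hmem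
      exact ⟨s₀, hs₀, hval⟩
    obtain ⟨s₀, hs₀mem, hs₀val⟩ := hIVT
    have hcase : θf s₀ = θy ∨ θf s₀ = -θy := abs_eq hθy.le |>.mp hs₀val
    obtain ⟨σ, hσsq, hσ1⟩ : ∃ σ : ℝ, σ^2 = 1 ∧ σ * θf s₀ = θy := by
      rcases hcase with h | h
      · exact ⟨1, by norm_num, by rw [h]; ring⟩
      · exact ⟨-1, by norm_num, by rw [h]; ring⟩
    -- the new path
    set τ : ℝ → ℝ := fun s => s₀ * sphi (2*s + 0) with hτ_def
    set τ' : ℝ → ℝ := fun s => s₀ * (2 * sphi' (2*s + 0)) with hτ'_def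
    have hτd : ∀ s, HasDerivAt τ (τ' s) s := fun s =>
      (sphi_affine_hasDeriv 2 0 s).const_mul s₀
    have hτ'c : Continuous τ' :=
      continuous_const.mul (continuous_const.mul (sphi'_cont.comp (by fun_prop)))
    have hτc : Continuous τ := continuous_const.mul (sphi_cont.comp (by fun_prop))
    have hτ'nn : ∀ s, 0 ≤ τ' s := fun s =>
      mul_nonneg hs₀mem.1 (mul_nonneg (by norm_num) (sphi'_nonneg _))
    have hτ0 : τ 0 = 0 := by rw [hτ_def]; norm_num [sphi_zero]
    have hτhalf : τ (1/2) = s₀ := by rw [hτ_def]; norm_num [sphi_one]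
    have hτ1 : τ 1 = s₀ := by rw [hτ_def]; norm_num [sphi_of_ge_one]
    set D1 : ℝ → ℝ := fun s => r (τ s) + (t - r s₀) * sphi (2*s + -1) with hD1_def
    set D1' : ℝ → ℝ := fun s => r' (τ s) * τ' s + (t - r s₀) * (2 * sphi' (2*s + -1))
      with hD1'_def
    set D2 : ℝ → ℝ := fun s => σ * θf (τ s) with hD2_def
    set D2' : ℝ → ℝ := fun s => σ * (θf' (τ s) * τ' s) with hD2'_def
    have hD1d : ∀ s, HasDerivAt D1 (D1' s) s := by
      intro s
      exact (((hrd (τ s)).comp s (hτd s)).add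
        ((sphi_affine_hasDeriv 2 (-1) s).const_mul (t - r s₀)))
    have hD2d : ∀ s, HasDerivAt D2 (D2' s) s := by
      intro s
      exact ((hθd (τ s)).comp s (hτd s)).const_mul σ
    have hD1'c : Continuous D1' :=
      ((hr'c.comp hτc).mul hτ'c).add
        (continuous_const.mul (continuous_const.mul (sphi'_cont.comp (by fun_prop))))
    have hD2'c : Continuous D2' := continuous_const.mul ((hθ'c.comp hτc).mul hτ'c)
    have hD1c : Continuous D1 := continuous_iff_continuousAt.2 fun s => (hD1d s).continuousAt
    set Ig : ℝ → ℝ := fun s => Real.sqrt (D1' s ^ 2 + f (D1 s) ^ 2 * D2' s ^ 2) with hIg_def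
    have hIgc : Continuous Ig :=
      (((hD1'c.pow 2).add (((hfc.comp hD1c).pow 2).mul (hD2'c.pow 2)))).sqrt
    have hmem : (∫ s in (0:ℝ)..1, Ig s) ∈ pathLens f (tx, 0) (t, θy) := by
      refine ⟨fun s => (D1 s, D2 s), fun s => (D1' s, D2' s), 0,
        fun s => (hD1d s).prodMk (hD2d s), by fun_prop, ?_, ?_, ?_, rfl⟩
      · intro s
        simp only
        rcases le_or_gt s (1/2 : ℝ) with hhalf | hhalf
        · have e1 : sphi (2*s + -1) = 0 := sphi_of_nonpos (by linarith)
          rw [hD1_def]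
          simp only [e1, mul_zero, add_zero]
          exact hposr (τ s)
        · have e1 : τ s = s₀ := by
            simp only [hτ_def]
            rw [sphi_of_ge_one (by linarith)]; ring
          have e2 := sphi_mem (2*s + -1)
          rw [hD1_def]
          simp only [e1]
          have hrs₀ : 0 ≤ r s₀ := hposr s₀
          nlinarith [e2.1, e2.2]
      · have e1 : sphi (2*(0:ℝ) + -1) = 0 := sphi_of_nonpos (by norm_num)
        have eD1 : D1 0 = tx := by
          rw [hD1_def]; simp only [hτ0, hr0]
          rw [show 2*(0:ℝ) + -1 = -1 by norm_num, sphi_of_nonpos (by norm_num : (-1:ℝ) ≤ 0)]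
          ring
        have eD2 : D2 0 = 0 := by
          rw [hD2_def]; simp only [hτ0, hθ0, mul_zero]
        rw [Prod.ext_iff]
        exact ⟨by simp [eD1], by simp [eD2]⟩
      · have e1 : sphi (2*(1:ℝ) + -1) = 1 := sphi_of_ge_one (by norm_num)
        have eD1 : D1 1 = t := by
          rw [hD1_def]; simp only [hτ1]
          rw [show 2*(1:ℝ) + -1 = 1 by norm_num, sphi_one]
          ring
        have eD2 : D2 1 = θy := by
          rw [hD2_def]; simp only [hτ1]; exact hσ1
        rw [Prod.ext_iff]
        refine ⟨by simp [eD1], ?_⟩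
        simp [eD2]
    -- length of the new path
    have hsplitI : (∫ s in (0:ℝ)..(1/2), Ig s) + (∫ s in (1/2:ℝ)..1, Ig s)
        = ∫ s in (0:ℝ)..1, Ig s :=
      integral_add_adjacent_intervals (hIgc.intervalIntegrable _ _)
        (hIgc.intervalIntegrable _ _)
    have hpc1 : (∫ s in (0:ℝ)..(1/2), Ig s) = ∫ v in (0:ℝ)..s₀, g v := by
      have heq : EqOn Ig (fun s => τ' s * g (τ s)) (uIcc 0 (1/2)) := by
        intro s hs
        rw [uIcc_of_le (by norm_num : (0:ℝ) ≤ 1/2)] at hs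
        have e1 : sphi' (2*s + -1) = 0 := sphi'_zero_left (by linarith [hs.2])
        have e2 : sphi (2*s + -1) = 0 := sphi_of_nonpos (by linarith [hs.2])
        rw [hIg_def, hD1'_def, hD2'_def, hD1_def, hg_def]
        simp only [e1, e2, mul_zero, add_zero]
        have h2 : τ' s * Real.sqrt (r' (τ s) ^ 2 + f (r (τ s)) ^ 2 * θf' (τ s) ^ 2)
            = Real.sqrt ((τ' s)^2 * (r' (τ s) ^ 2 + f (r (τ s)) ^ 2 * θf' (τ s) ^ 2)) := by
          rw [Real.sqrt_mul (sq_nonneg _), Real.sqrt_sq (hτ'nn s)]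
        rw [h2]
        congr 1
        linear_combination (f (r (τ s))^2 * θf' (τ s)^2 * (τ' s)^2) * hσsq
      rw [integral_congr heq]
      have := subst_integral τ τ' g 0 (1/2) hτd hτ'c hgc
      rw [this, hτ0, hτhalf]
    have hpc2 : (∫ s in (1/2:ℝ)..1, Ig s) = |t - r s₀| := by
      have heq : EqOn Ig (fun s => |t - r s₀| * (2 * sphi' (2*s + -1))) (uIcc (1/2) 1) := by
        intro s hs
        rw [uIcc_of_le (by norm_num : (1/2:ℝ) ≤ 1)] at hs
        have e1 : sphi' (2*s + 0) = 0 := sphi'_zero_right (by linarith [hs.1])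
        have eτ' : τ' s = 0 := by
          simp only [hτ'_def]; rw [e1]; ring
        rw [hIg_def, hD1'_def, hD2'_def]
        simp only [eτ', mul_zero, zero_mul, zero_add]
        have h2 : |t - r s₀| * (2 * sphi' (2*s + -1))
            = Real.sqrt ((t - r s₀)^2 * (2 * sphi' (2*s + -1))^2) := by
          rw [Real.sqrt_mul (sq_nonneg _), Real.sqrt_sq_eq_abs,
            Real.sqrt_sq (mul_nonneg (by norm_num) (sphi'_nonneg _))]
        rw [h2]
        congr 1
        ring
      rw [integral_congr heq]
      have hd : ∀ s ∈ uIcc (1/2:ℝ) 1, HasDerivAt (fun s => |t - r s₀| * sphi (2*s + -1))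
          (|t - r s₀| * (2 * sphi' (2*s + -1))) s :=
        fun s _ => (sphi_affine_hasDeriv 2 (-1) s).const_mul _
      rw [integral_eq_sub_of_hasDerivAt hd (Continuous.intervalIntegrable (by fun_prop) _ _)]
      norm_num [sphi_one, sphi_zero]
    -- lower bound on the tail of γ
    have hsplitg : (∫ s in (0:ℝ)..s₀, g s) + (∫ s in s₀..(1:ℝ), g s) = ∫ s in (0:ℝ)..1, g s :=
      integral_add_adjacent_intervals (hgc.intervalIntegrable _ _) (hgc.intervalIntegrable _ _)
    obtain ⟨sg, hsgsq, hsg⟩ : ∃ sg : ℝ, sg^2 = 1 ∧ sg * (θf 1 - θf s₀) = |θf 1 - θf s₀| := by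
      rcases le_or_gt 0 (θf 1 - θf s₀) with h | h
      · exact ⟨1, by norm_num, by rw [abs_of_nonneg h]; ring⟩
      · exact ⟨-1, by norm_num, by rw [abs_of_neg h]; ring⟩
    set A : ℝ := t - r s₀ with hA_def
    set B : ℝ := δ' * |θf 1 - θf s₀| with hB_def
    have hgap : θz - θy ≤ |θf 1 - θf s₀| := by
      rw [hθ1]
      apply angle_gap θy θz (θf s₀) k hθy hθyz hθz hcase
    have hB_pos : 0 < B := mul_pos hδ' (by linarith)
    set N : ℝ := Real.sqrt (A^2 + B^2) with hN_def
    have hN_pos : 0 < N := by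
      rw [hN_def]
      apply Real.sqrt_pos.mpr
      have := sq_nonneg A
      nlinarith [hB_pos]
    have hN_sq : A^2 + B^2 = N^2 := (Real.sq_sqrt (by positivity)).symm
    have htail : N ≤ ∫ s in s₀..(1:ℝ), g s := by
      have hlow : ∀ s ∈ Icc s₀ 1, A/N * r' s + B/N * (δ' * sg * θf' s) ≤ g s := by
        intro s hs
        have hsmem : s ∈ Icc (0:ℝ) 1 := ⟨le_trans hs₀mem.1 hs.1, hs.2⟩
        have hfr : δ' ≤ f (r s) := hfδ _ (hnd s hsmem).le (hr_ub s hsmem)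
        have hcs := cs_ineq A B N (r' s) (δ' * sg * θf' s) hN_pos hN_sq
        apply le_trans hcs
        rw [hg_def]
        apply Real.sqrt_le_sqrt
        have h1 : (δ' * sg * θf' s)^2 = δ'^2 * θf' s ^2 := by
          rw [show (δ' * sg * θf' s)^2 = δ'^2 * sg^2 * θf' s^2 by ring, hsgsq]; ring
        rw [h1]
        have h2 : δ'^2 ≤ f (r s)^2 := pow_le_pow_left₀ hδ'.le hfr 2
        have h3 := mul_le_mul_of_nonneg_right h2 (sq_nonneg (θf' s))
        linarith
      have hlhs_int : (∫ s in s₀..(1:ℝ), (A/N * r' s + B/N * (δ' * sg * θf' s))) = N := by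
        rw [intervalIntegral.integral_add (f := fun s => A/N * r' s)
            (g := fun s => B/N * (δ' * sg * θf' s))
            ((continuous_const.mul hr'c).intervalIntegrable _ _)
            ((continuous_const.mul (continuous_const.mul hθ'c)).intervalIntegrable _ _)]
        rw [intervalIntegral.integral_const_mul, intervalIntegral.integral_const_mul,
          intervalIntegral.integral_const_mul, hftc_r, hftc_θ, hr1]
        have e1 : δ' * sg * (θf 1 - θf s₀) = B := by
          rw [hB_def, ← hsg]; ring
        have e2 : t - r s₀ = A := by rw [hA_def]
        rw [show B/N * (δ' * sg * (θf 1 - θf s₀)) = B/N * (δ' * sg * (θf 1 - θf s₀)) from rfl]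
        rw [mul_comm (δ' * sg) (θf 1 - θf s₀)] at e1 ⊢
        rw [e1, e2]
        have : A/N*A + B/N*B = (A^2+B^2)/N := by ring
        rw [this, hN_sq, sq, mul_div_assoc, div_self hN_pos.ne', mul_one]
      calc N = ∫ s in s₀..(1:ℝ), (A/N * r' s + B/N * (δ' * sg * θf' s)) := hlhs_int.symm
        _ ≤ ∫ s in s₀..(1:ℝ), g s := by
            apply integral_mono_on hs₀mem.2
              (((continuous_const.mul hr'c).add
                (continuous_const.mul (continuous_const.mul hθ'c))).intervalIntegrable _ _)
              (hgc.intervalIntegrable _ _) hlow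
    -- conclude
    refine ⟨∫ s in (0:ℝ)..1, Ig s, hmem, ?_⟩
    have hLy_eq : (∫ s in (0:ℝ)..1, Ig s) = (∫ v in (0:ℝ)..s₀, g v) + |A| := by
      rw [← hsplitI, hpc1, hpc2]
    have hAle : |A| ≤ 2*tx+2*t+1 := by
      rw [hA_def, abs_le]
      have h2 := hr_ub s₀ hs₀mem
      have h3 := hnd s₀ hs₀mem
      constructor
      · linarith
      · linarith
    have hq_pos : 0 < δ' * (θz - θy) := mul_pos hδ' (by linarith)
    have hgap2 : Real.sqrt ((2*tx+2*t+1)^2 + (δ'*(θz-θy))^2) - (2*tx+2*t+1)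
        ≤ Real.sqrt (A^2 + (δ'*(θz-θy))^2) - |A| :=
      sqrt_gap _ _ _ hq_pos hAle
    have hq_le_B : δ' * (θz - θy) ≤ B := by
      rw [hB_def]
      exact mul_le_mul_of_nonneg_left hgap hδ'.le
    have hmono2 : Real.sqrt (A^2 + (δ'*(θz-θy))^2) ≤ N := by
      rw [hN_def]
      apply Real.sqrt_le_sqrt
      have h9 := pow_le_pow_left₀ hq_pos.le hq_le_B 2
      linarith
    rw [hLy_eq, hLint, ← hsplitg]
    linarith [hgap2, hmono2, htail]

set_option maxHeartbeats 1000000 in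
/-- Lemma 5.3 (monotonicity along circles): on a von Mangoldt surface of revolution, let
`x̃ = (tx, 0) ≠ p̃`, `t > 0`, and `ỹ = (t, θy)`, `z̃ = (t, θz)` on the metric circle
`∂B_t(p̃)` with `0 < θy < θz ≤ π`.  Then `d̃(x̃, ỹ) < d̃(x̃, z̃)`. -/
theorem stmt12 (f : ℝ → ℝ) (hf : IsVonMangoldt f)
    (tx t θy θz : ℝ) (htx : 0 < tx) (ht : 0 < t)
    (hθy : 0 < θy) (hθyz : θy < θz) (hθz : θz ≤ Real.pi) :
    sDist f (tx, 0) (t, θy) < sDist f (tx, 0) (t, θz) := by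
  obtain ⟨⟨hsmooth, hodd, hfpos, hf'0⟩, _⟩ := hf
  have hfc : Continuous f := hsmooth.continuous
  have hπ := Real.pi_pos
  have hθyπ : θy < Real.pi := lt_of_lt_of_le hθyz hθz
  have hf0 : f 0 = 0 := by
    have := hodd 0
    simp only [neg_zero] at this
    linarith
  set sb := Real.sin (θy/2) with hsb_def
  have hsb_pos : 0 < sb := Real.sin_pos_of_pos_of_lt_pi (by linarith) (by linarith)
  have hsb_lt : sb < 1 := by
    have hcb : 0 < Real.cos (θy/2) := Real.cos_pos_of_mem_Ioo ⟨by linarith, by linarith⟩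
    nlinarith [Real.sin_sq_add_cos_sq (θy/2)]
  set K := (1 + sb)/(2*sb) with hK_def
  have hK1 : 1 < K := by
    rw [hK_def, lt_div_iff₀ (by linarith)]
    linarith
  have hKs : K * (2 * sb) = 1 + sb := by
    rw [hK_def]
    field_simp
  -- slope bound near zero
  have hderiv0 : HasDerivAt f 1 0 := by
    have h := ((hsmooth.differentiable (by simp)) 0).hasDerivAt
    rwa [hf'0] at h
  obtain ⟨ρ₀, hρ₀pos, hρ₀⟩ : ∃ ρ₀ > 0, ∀ u, 0 < u → u ≤ ρ₀ → f u ≤ K * u := by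
    have hslope := hasDerivAt_iff_tendsto_slope.mp hderiv0
    rw [Metric.tendsto_nhdsWithin_nhds] at hslope
    obtain ⟨d, hdpos, hd⟩ := hslope (K - 1) (by linarith)
    refine ⟨d/2, by linarith, ?_⟩
    intro u hu hud
    have h1 : u ≠ 0 := hu.ne'
    have h2 : dist u 0 < d := by
      rw [Real.dist_eq, sub_zero, abs_of_pos hu]; linarith
    have h3 := hd h1 h2
    rw [Real.dist_eq] at h3
    have h4 : slope f 0 u = f u / u := by
      rw [slope_def_field]
      rw [hf0, sub_zero, sub_zero]
    rw [h4] at h3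
    have h5 : f u / u - 1 < K - 1 := lt_of_le_of_lt (le_abs_self _) h3
    have h6 : f u / u < K := by linarith
    calc f u = (f u / u) * u := by field_simp
      _ ≤ K * u := mul_le_mul_of_nonneg_right h6.le hu.le
  set ρ := min (min tx t) (min ρ₀ 1) with hρ_def
  have hρpos : 0 < ρ := by
    apply lt_min (lt_min htx ht) (lt_min hρ₀pos one_pos)
  have hρtx : ρ ≤ tx := le_trans (min_le_left _ _) (min_le_left _ _)
  have hρt : ρ ≤ t := le_trans (min_le_left _ _) (min_le_right _ _)
  have hρρ₀ : ρ ≤ ρ₀ := le_trans (min_le_right _ _) (min_le_left _ _)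
  have hρ1 : ρ ≤ 1 := le_trans (min_le_right _ _) (min_le_right _ _)
  obtain ⟨Ly0, hLy0mem, hLy0le⟩ := chord_path f hfc hfpos tx t θy ρ K htx ht hθy hθyπ
    hρpos hρtx hρt hK1.le (fun u hu h2 => hρ₀ u hu (le_trans h2 hρρ₀))
  set ε₀ := ρ*(1-sb) with hε₀_def
  have hε₀pos : 0 < ε₀ := mul_pos hρpos (by linarith)
  have hε₀ρ : ε₀ ≤ ρ := by nlinarith
  have hLy0' : Ly0 ≤ tx + t - ε₀ := by
    have e : K * (2*ρ*sb) = ρ*(1+sb) := by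
      rw [show K * (2*ρ*sb) = (K*(2*sb))*ρ by ring, hKs]; ring
    rw [hε₀_def]
    calc Ly0 ≤ (tx - ρ) + K * (2 * ρ * sb) + (t - ρ) := hLy0le
      _ = tx + t - 2*ρ + K*(2*ρ*sb) := by ring
      _ = tx + t - 2*ρ + ρ*(1+sb) := by rw [e]
      _ = tx + t - ρ*(1-sb) := by ring
  set δ := ε₀/4 with hδ_def
  have hδpos : 0 < δ := by rw [hδ_def]; linarith
  have hδR : δ ≤ 2*tx + t + 1 := by
    rw [hδ_def]
    linarith
  obtain ⟨u₀, hu₀mem, hu₀min⟩ :=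
    (isCompact_Icc (a := δ) (b := 2*tx+t+1)).exists_isMinOn
      ⟨δ, left_mem_Icc.mpr hδR⟩ hfc.continuousOn
  set δ' := f u₀ with hδ'_def
  have hδ'pos : 0 < δ' := hfpos u₀ (lt_of_lt_of_le hδpos hu₀mem.1)
  have hfδ : ∀ u, δ ≤ u → u ≤ 2*tx+t+1 → δ' ≤ f u := fun u h1 h2 =>
    isMinOn_iff.mp hu₀min u ⟨h1, h2⟩
  have hqpos : 0 < δ'*(θz - θy) := mul_pos hδ'pos (by linarith)
  set ε₁ := Real.sqrt ((2*tx+2*t+1)^2 + (δ'*(θz-θy))^2) - (2*tx+2*t+1) with hε₁_def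
  have hε₁pos : 0 < ε₁ := by
    rw [hε₁_def, sub_pos]
    have hΛpos : (0:ℝ) < 2*tx+2*t+1 := by linarith
    calc 2*tx+2*t+1 = Real.sqrt ((2*tx+2*t+1)^2) := (Real.sqrt_sq hΛpos.le).symm
      _ < Real.sqrt ((2*tx+2*t+1)^2 + (δ'*(θz-θy))^2) := by
          apply Real.sqrt_lt_sqrt (sq_nonneg _)
          nlinarith [hqpos]
  set ε := min (ε₀/2) ε₁ with hε_def
  have hεpos : 0 < ε := lt_min (by linarith) hε₁pos
  have hbdd : BddBelow (pathLens f (tx, 0) (t, θy)) :=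
    ⟨0, fun L hL => pathLens_nonneg hL⟩
  have hle_y : sDist f (tx, 0) (t, θy) ≤ Ly0 := csInf_le hbdd hLy0mem
  have hz_ne : (pathLens f (tx, 0) (t, θz)).Nonempty := by
    refine ⟨_, fun s => (tx + (t - tx) * sphi (1*s+0), θz * sphi (1*s+0)),
      fun s => ((t - tx) * (1 * sphi' (1*s+0)), θz * (1 * sphi' (1*s+0))), 0,
      fun s => (((sphi_affine_hasDeriv 1 0 s).const_mul (t - tx)).const_add tx).prodMk
        ((sphi_affine_hasDeriv 1 0 s).const_mul θz), by fun_prop, ?_, ?_, ?_, rfl⟩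
    · intro s
      simp only
      have h := sphi_mem (1*s+0)
      rcases le_total tx t with hc | hc
      · have : 0 ≤ (t - tx) * sphi (1*s+0) := mul_nonneg (by linarith) h.1
        linarith
      · have : (t - tx) * 1 ≤ (t - tx) * sphi (1*s+0) :=
          mul_le_mul_of_nonpos_left h.2 (by linarith)
        linarith
    · norm_num [sphi_zero]
    · norm_num [sphi_one]
  have hmain : ∀ Lz ∈ pathLens f (tx, 0) (t, θz), sDist f (tx, 0) (t, θy) + ε ≤ Lz := by
    intro Lz hLz
    rcases surgery f hfc tx t θy θz htx ht hθy hθyz hθz δ δ' Lz hδpos hδ'pos hfδ hLz with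
      hcase | ⟨Ly, hLymem, hLyle⟩
    · have h1 : ε ≤ ε₀/2 := min_le_left _ _
      have h2 : tx + t - 2*δ = tx + t - ε₀/2 := by rw [hδ_def]; ring
      rw [h2] at hcase
      linarith
    · have h2 : sDist f (tx, 0) (t, θy) ≤ Ly := csInf_le hbdd hLymem
      have h3 : ε ≤ ε₁ := min_le_right _ _
      rw [← hε₁_def] at hLyle
      linarith
  have hfinal : sDist f (tx, 0) (t, θy) + ε ≤ sDist f (tx, 0) (t, θz) := by
    rw [sDist]
    exact le_csInf hz_ne hmain
  linarith
end
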